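/- For a staged tree, the ideal of model invariants I_T is contained in the paths ideal I_paths, which in turn is contained in the kernel of the algebraic parametrisation φ: ℝ[p_1,…,p_n] → ℝ[Θ]/⟨θ−1⟩ sending p_i to the product of edge labels on the i-th root-to-leaf path. -/

import Mathlib

inductive PTree (α : Type) : Type
  | leaf : PTree α
  | node : List (α × PTree α) → PTree α

namespace PTree

variable {α : Type} {R : Type} [CommRing R]

mutual
/-- list of (index-path, product of labels) over all root-to-leaf paths. -/
def leafData (f : α → R) : PTree α → List (List ℕ × R)
  | .leaf => [([], 1)]
  | .node cs => leafDataAux f 0 cs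
def leafDataAux (f : α → R) : ℕ → List (α × PTree α) → List (List ℕ × R)
  | _, [] => []
  | i, c :: cs =>
      ((leafData f c.2).map fun p => (i :: p.1, f c.1 * p.2)) ++ leafDataAux f (i + 1) cs
end

/-- the subtree rooted at the vertex given by an index path. -/
def subtreeAt : PTree α → List ℕ → Option (PTree α)
  | T, [] => some T
  | .leaf, _ :: _ => none
  | .node cs, i :: is =>
      match cs[i]? with
      | some c => subtreeAt c.2 is
      | none => none

/-- product of the labels along the root-to-v path. -/
def pathProd (f : α → R) : PTree α → List ℕ → Option R
  | _, [] => some 1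
  | .leaf, _ :: _ => none
  | .node cs, i :: is =>
      match cs[i]? with
      | some c => (pathProd f c.2 is).map (f c.1 * ·)
      | none => none

/-- t(T) : sum of the products of labels over all root-to-leaf paths of T. -/
def tPoly (f : α → R) (T : PTree α) : R :=
  ((leafData f T).map Prod.snd).sum

mutual
/-- the list of (index paths of) non-leaf vertices of T. -/
def intVerts : PTree α → List (List ℕ)
  | .leaf => []
  | .node cs => [] :: intVertsAux 0 cs
def intVertsAux : ℕ → List (α × PTree α) → List (List ℕ)
  | _, [] => []
  | i, c :: cs => ((intVerts c.2).map (i :: ·)) ++ intVertsAux (i + 1) cs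
end

mutual
/-- the local sum-to-one polynomials `Σ_{e ∈ E(v)} θ(e) − 1`, one for each non-leaf vertex. -/
noncomputable def stoPolys : PTree α → List (MvPolynomial α ℝ)
  | .leaf => []
  | .node cs => ((cs.map fun c => MvPolynomial.X c.1).sum - 1) :: stoPolysAux cs
noncomputable def stoPolysAux : List (α × PTree α) → List (MvPolynomial α ℝ)
  | [] => []
  | (_a, t) :: cs => stoPolys t ++ stoPolysAux cs
end

end PTree

namespace StagedTree

variable {m : ℕ}

/-- the list of root-to-leaf paths of a staged tree with labels the indeterminates
`X a`, `a : Fin m`, together with the corresponding monomials of edge labels. -/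
noncomputable def pathList (T : PTree (Fin m)) : List (List ℕ × MvPolynomial (Fin m) ℝ) :=
  PTree.leafData MvPolynomial.X T

/-- number of root-to-leaf paths (atomic events). -/
noncomputable def nAtoms (T : PTree (Fin m)) : ℕ := (pathList T).length

/-- the monomial parametrisation `φ_toric : ℝ[p_1,…,p_n] → ℝ[Θ]`,
`p_i ↦ ∏_{e ∈ E(λ_i)} θ(e)`. -/
noncomputable def phiToric (T : PTree (Fin m)) :
    MvPolynomial (Fin (nAtoms T)) ℝ →ₐ[ℝ] MvPolynomial (Fin m) ℝ :=
  MvPolynomial.aeval fun i => ((pathList T).get i).2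

/-- the ideal `⟨θ−1⟩` of local sum-to-one conditions. -/
noncomputable def stoIdeal (T : PTree (Fin m)) : Ideal (MvPolynomial (Fin m) ℝ) :=
  Ideal.span {q | q ∈ PTree.stoPolys T}

/-- the parametrisation `φ : ℝ[p_1,…,p_n] → ℝ[Θ]/⟨θ−1⟩`. -/
noncomputable def phi (T : PTree (Fin m)) :
    MvPolynomial (Fin (nAtoms T)) ℝ →ₐ[ℝ] (MvPolynomial (Fin m) ℝ ⧸ stoIdeal T) :=
  (Ideal.Quotient.mkₐ ℝ (stoIdeal T)).comp (phiToric T)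

/-- `p_{[v]}` as a linear polynomial in the atomic probabilities: the sum of the
variables `p_i` over all root-to-leaf paths `i` passing through the vertex `v`. -/
noncomputable def pPoly (T : PTree (Fin m)) (v : List ℕ) :
    MvPolynomial (Fin (nAtoms T)) ℝ :=
  (((List.finRange (nAtoms T)).filter fun i => v.isPrefixOf ((pathList T).get i).1).map
    MvPolynomial.X).sum

/-- vertices `v`, `w` are in the same stage with `k` emanating edges: both are non-leaf
vertices and their emanating edges carry the same ordered vector of labels. -/
def sameStage (T : PTree (Fin m)) (v w : List ℕ) (k : ℕ) : Prop :=
  ∃ csv csw : List (Fin m × PTree (Fin m)),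
    PTree.subtreeAt T v = some (PTree.node csv) ∧
    PTree.subtreeAt T w = some (PTree.node csw) ∧
    csv.map Prod.fst = csw.map Prod.fst ∧ csv.length = k

/-- the ideal `I_T` of model invariants, generated by the odds-ratio differences. -/
noncomputable def modelIdeal (T : PTree (Fin m)) : Ideal (MvPolynomial (Fin (nAtoms T)) ℝ) :=
  Ideal.span {q | ∃ v w k, sameStage T v w k ∧ ∃ i < k,
    q = pPoly T (v ++ [i]) * pPoly T w - pPoly T (w ++ [i]) * pPoly T v}

/-- the ideal `I_paths` generated by the path differences. -/
noncomputable def pathsIdeal (T : PTree (Fin m)) : Ideal (MvPolynomial (Fin (nAtoms T)) ℝ) :=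
  Ideal.span {q | ∃ v w k, sameStage T v w k ∧ ∃ i < k, ∃ j < k,
    q = pPoly T (v ++ [i]) * pPoly T (w ++ [j]) - pPoly T (w ++ [i]) * pPoly T (v ++ [j])}

/-- the product `𝐩` of all denominators `p_{[v]}`, `v` a non-leaf vertex. -/
noncomputable def bigP (T : PTree (Fin m)) : MvPolynomial (Fin (nAtoms T)) ℝ :=
  ((PTree.intVerts T).map (pPoly T)).prod

/-- `t(v)`, the sum of the monomials of the `v`-to-leaf paths of the subtree rooted at `v`. -/
noncomputable def tAt (T : PTree (Fin m)) (v : List ℕ) : MvPolynomial (Fin m) ℝ :=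
  match PTree.subtreeAt T v with
  | some S => PTree.tPoly MvPolynomial.X S
  | none => 0

/-- condition (⋆): `t(v_i)t(w_j) = t(w_i)t(v_j)` for all same-stage pairs. -/
def starCond (T : PTree (Fin m)) : Prop :=
  ∀ v w k, sameStage T v w k → ∀ i < k, ∀ j < k,
    tAt T (v ++ [i]) * tAt T (w ++ [j]) = tAt T (w ++ [i]) * tAt T (v ++ [j])

end StagedTree

/-!
Every root-to-leaf path through a non-leaf vertex `v` passes through exactly one child `v_j`,
so `p_[v] = Σ_j p_[v_j]`, and each odds-ratio difference is the sum over `j` of path differences.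

The toric parametrisation sends `p_[v]` to `θ(λ_v) · t(v)`, where `θ(λ_v)` is the product of the
labels from the root to `v`. By induction on the tree, `t(S) - 1` lies in the ideal generated by the
sum-to-one polynomials of `S`, so modulo `⟨θ−1⟩` we get `φ(p_[v_i]) = θ(λ_v) θ(e_i)`. For `v ∼ w`
the `i`-th edges of `v` and `w` carry the same label, so both products of a path difference
have the same image `θ(λ_v) θ(λ_w) θ(e_i) θ(e_j)`.
-/

namespace PTree

variable {α R : Type} [CommRing R] (f : α → R)

theorem subtreeAt_append_singleton {T : PTree α} {v : List ℕ} {cs : List (α × PTree α)} {i : ℕ}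
    (hv : subtreeAt T v = some (node cs)) (hi : i < cs.length) :
    subtreeAt T (v ++ [i]) = some cs[i].2 := by
  induction v generalizing T with
  | nil => cases hv; simp [subtreeAt, hi]
  | cons j js ih =>
    cases T with
    | leaf => simp [subtreeAt] at hv
    | node cs' =>
      simp only [subtreeAt, List.cons_append] at hv ⊢
      split at hv <;> simp_all

theorem pathProd_append_singleton {T : PTree α} {v : List ℕ} {cs : List (α × PTree α)} {i : ℕ}
    {q : R} (hv : subtreeAt T v = some (node cs)) (hq : pathProd f T v = some q)
    (hi : i < cs.length) : pathProd f T (v ++ [i]) = some (q * f cs[i].1) := by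
  induction v generalizing T q with
  | nil => cases hv; simp_all [pathProd, mul_comm]
  | cons j js ih =>
    cases T with
    | leaf => simp [subtreeAt] at hv
    | node cs' =>
      simp only [subtreeAt, pathProd, List.cons_append] at hv hq ⊢
      split at hv
      · rename_i c hc
        simp only [hc, Option.map_eq_some_iff] at hq ⊢
        obtain ⟨q', hq', rfl⟩ := hq
        simp [ih hv hq', mul_assoc]
      · simp at hv

theorem mem_leafDataAux {cs : List (α × PTree α)} {i : ℕ} {p : List ℕ × R}
    (hp : p ∈ leafDataAux f i cs) : ∃ j < cs.length, ∃ t, p.1 = (i + j) :: t := by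
  induction cs generalizing i with
  | nil => simp [leafDataAux] at hp
  | cons c cs ih =>
    rw [leafDataAux, List.mem_append, List.mem_map] at hp
    rcases hp with ⟨q, -, rfl⟩ | hp
    · exact ⟨0, by simp, q.1, rfl⟩
    · obtain ⟨j, hj, t, ht⟩ := ih hp
      exact ⟨j + 1, by simp; omega, t, by rw [ht]; congr 1; omega⟩

theorem filter_leafDataAux_isPrefixOf {cs : List (α × PTree α)} {c : α × PTree α} {i : ℕ}
    (hc : cs[i]? = some c) (off : ℕ) (is : List ℕ) :
    (leafDataAux f off cs).filter (fun p => ((off + i) :: is).isPrefixOf p.1) =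
      ((leafData f c.2).filter fun p => is.isPrefixOf p.1).map
        fun p => ((off + i) :: p.1, f c.1 * p.2) := by
  induction cs generalizing i off with
  | nil => simp at hc
  | cons c' cs ih =>
    rw [leafDataAux, List.filter_append]
    cases i with
    | zero =>
      cases hc
      have hrest : (leafDataAux f (off + 1) cs).filter
          (fun p => (off :: is).isPrefixOf p.1) = [] := by
        refine List.filter_eq_nil_iff.mpr fun p hp => ?_
        obtain ⟨j, -, t, ht⟩ := mem_leafDataAux f hp
        simp [ht]; omega
      simp only [Nat.add_zero, hrest, List.append_nil, List.filter_map]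
      congr 1
      exact List.filter_congr fun p _ => by simp
    | succ i =>
      have hfirst : ((leafData f c'.2).map fun p => (off :: p.1, f c'.1 * p.2)).filter
          (fun p => ((off + (i + 1)) :: is).isPrefixOf p.1) = [] := by
        simp only [List.filter_eq_nil_iff, List.mem_map]
        rintro _ ⟨p, -, rfl⟩
        simp
      have := ih (by simpa using hc) (off + 1)
      rw [show off + 1 + i = off + (i + 1) by omega] at this
      rw [hfirst, List.nil_append, this]

theorem exists_pathProd_filter_leafData {T S : PTree α} {v : List ℕ}
    (h : subtreeAt T v = some S) :
    ∃ q, pathProd f T v = some q ∧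
      (leafData f T).filter (fun p => v.isPrefixOf p.1) =
        (leafData f S).map fun p => (v ++ p.1, q * p.2) := by
  induction v generalizing T with
  | nil =>
    cases h
    refine ⟨1, by simp [pathProd], ?_⟩
    simp
  | cons i is ih =>
    cases T with
    | leaf => simp [subtreeAt] at h
    | node cs =>
      simp only [subtreeAt] at h
      split at h
      · rename_i c hc
        obtain ⟨q, hq, hfilter⟩ := ih h
        refine ⟨f c.1 * q, by simp [pathProd, hc, hq], ?_⟩
        have := filter_leafDataAux_isPrefixOf f hc 0 is
        rw [Nat.zero_add] at this
        rw [leafData, this, hfilter]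
        simp [mul_assoc]
      · simp at h

theorem exists_child_of_mem_leafData {T : PTree α} {v : List ℕ} {cs : List (α × PTree α)}
    {p : List ℕ × R} (hv : subtreeAt T v = some (node cs)) (hp : p ∈ leafData f T)
    (hvp : v.isPrefixOf p.1) : ∃ j < cs.length, ∃ t, p.1 = v ++ j :: t := by
  obtain ⟨q, -, hfilter⟩ := exists_pathProd_filter_leafData f hv
  have hmem : p ∈ (leafData f T).filter (fun p => v.isPrefixOf p.1) := List.mem_filter.2 ⟨hp, hvp⟩
  rw [hfilter, List.mem_map] at hmem
  obtain ⟨s, hs, rfl⟩ := hmem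
  obtain ⟨j, hj, t, ht⟩ := mem_leafDataAux f hs
  exact ⟨j, hj, t, by simp [ht]⟩

theorem sum_map_snd_leafDataAux (cs : List (α × PTree α)) (i : ℕ) :
    ((leafDataAux f i cs).map Prod.snd).sum = (cs.map fun c => f c.1 * tPoly f c.2).sum := by
  induction cs generalizing i with
  | nil => simp [leafDataAux]
  | cons c cs ih => simp [leafDataAux, ih, tPoly, Function.comp_def, List.sum_map_mul_left]

theorem tPoly_node (cs : List (α × PTree α)) :
    tPoly f (node cs) = (cs.map fun c => f c.1 * tPoly f c.2).sum :=
  sum_map_snd_leafDataAux f cs 0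

theorem stoPolys_child_subset {cs : List (α × PTree α)} {c : α × PTree α} (hc : c ∈ cs) :
    stoPolys c.2 ⊆ stoPolys (node cs) := by
  rw [stoPolys]
  refine List.Subset.trans ?_ (List.subset_cons_self _ _)
  induction cs with
  | nil => simp at hc
  | cons c' cs ih =>
    rw [stoPolysAux]
    rcases List.mem_cons.mp hc with rfl | hc
    · exact List.subset_append_left _ _
    · exact List.Subset.trans (ih hc) (List.subset_append_right _ _)

theorem stoPolys_subset_of_subtreeAt {T S : PTree α} {v : List ℕ} (h : subtreeAt T v = some S) :
    stoPolys S ⊆ stoPolys T := by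
  induction v generalizing T with
  | nil => cases h; exact List.Subset.refl _
  | cons j js ih =>
    cases T with
    | leaf => simp [subtreeAt] at h
    | node cs =>
      simp only [subtreeAt] at h
      split at h
      · rename_i c hc
        exact List.Subset.trans (ih h) (stoPolys_child_subset (List.mem_of_getElem? hc))
      · simp at h

open MvPolynomial in
theorem tPoly_X_sub_one_mem_span_stoPolys : ∀ S : PTree α,
    tPoly (X : α → MvPolynomial α ℝ) S - 1 ∈ Ideal.span {q | q ∈ stoPolys S}
  | .leaf => by simp [tPoly, leafData]
  | .node cs => by
    have hchild : ∀ c ∈ cs,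
        tPoly (X : α → MvPolynomial α ℝ) c.2 - 1 ∈ Ideal.span {q | q ∈ stoPolys (node cs)} :=
      fun c hc => Ideal.span_mono (fun q hq => stoPolys_child_subset hc hq)
        (tPoly_X_sub_one_mem_span_stoPolys c.2)
    have hsplit : tPoly (X : α → MvPolynomial α ℝ) (node cs) - 1 =
        ((cs.map fun c => X c.1).sum - 1) + (cs.map fun c => X c.1 * (tPoly X c.2 - 1)).sum := by
      have hterm (c : α × PTree α) :
          (X c.1 * tPoly X c.2 : MvPolynomial α ℝ) = X c.1 + X c.1 * (tPoly X c.2 - 1) := by ring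
      rw [tPoly_node, List.map_congr_left (fun c _ => hterm c), List.sum_map_add]
      ring
    rw [hsplit]
    refine add_mem (Ideal.subset_span (by simp [stoPolys])) (list_sum_mem ?_)
    simp only [List.mem_map]
    rintro _ ⟨c, hc, rfl⟩
    exact Ideal.mul_mem_left _ _ (hchild c hc)
  decreasing_by
    obtain ⟨a, t⟩ := c
    have := List.sizeOf_lt_of_mem hc
    simp only [Prod.mk.sizeOf_spec, node.sizeOf_spec] at this ⊢
    omega

end PTree

namespace StagedTree

open PTree MvPolynomial

variable {m : ℕ} (T : PTree (Fin m))

theorem pPoly_eq_sum_ite (v : List ℕ) :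
    pPoly T v = ∑ i : Fin (nAtoms T),
      if v.isPrefixOf ((pathList T).get i).1 then X i else 0 := by
  rw [pPoly, Fin.sum_univ_def, List.sum_map_ite]
  simp only [Bool.decide_eq_true, List.map_const', List.sum_replicate, smul_zero, add_zero]
  rfl

theorem phiToric_pPoly (v : List ℕ) :
    phiToric T (pPoly T v) =
      (((pathList T).filter fun p => v.isPrefixOf p.1).map Prod.snd).sum := by
  conv_rhs => rw [← List.map_get_finRange (pathList T), List.filter_map, List.map_map]
  unfold pPoly phiToric nAtoms
  simp [map_list_sum, Function.comp_def]

variable {T}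

theorem pPoly_eq_sum_children {v : List ℕ} {cs : List (Fin m × PTree (Fin m))}
    (hv : subtreeAt T v = some (node cs)) :
    pPoly T v = ∑ j ∈ Finset.range cs.length, pPoly T (v ++ [j]) := by
  simp only [pPoly_eq_sum_ite]
  rw [Finset.sum_comm]
  refine Finset.sum_congr rfl fun i _ => ?_
  by_cases h : v.isPrefixOf ((pathList T).get i).1
  · obtain ⟨j, hj, t, ht⟩ :=
      exists_child_of_mem_leafData _ (p := (pathList T).get i) hv (List.get_mem _ _) h
    simp [ht, hj]
  · rw [if_neg h]
    refine (Finset.sum_eq_zero fun j _ => if_neg fun hj => h ?_).symm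
    rw [List.isPrefixOf_iff_prefix] at hj ⊢
    exact (List.prefix_append v [j]).trans hj

theorem phiToric_pPoly_of_subtreeAt {v : List ℕ} {S : PTree (Fin m)}
    {q : MvPolynomial (Fin m) ℝ} (hS : subtreeAt T v = some S) (hq : pathProd X T v = some q) :
    phiToric T (pPoly T v) = q * tPoly X S := by
  obtain ⟨q', hq', hfilter⟩ :=
    exists_pathProd_filter_leafData (X : Fin m → MvPolynomial (Fin m) ℝ) hS
  obtain rfl : q = q' := Option.some.inj (hq.symm.trans hq')
  rw [phiToric_pPoly, pathList, hfilter, List.map_map, Function.comp_def, List.sum_map_mul_left]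
  rfl

theorem mk_tPoly_of_subtreeAt {v : List ℕ} {S : PTree (Fin m)} (hS : subtreeAt T v = some S) :
    Ideal.Quotient.mk (stoIdeal T) (tPoly X S) = 1 := by
  rw [← map_one (Ideal.Quotient.mk _), Ideal.Quotient.eq]
  exact Ideal.span_mono (fun q hq => stoPolys_subset_of_subtreeAt hS hq)
    (tPoly_X_sub_one_mem_span_stoPolys S)

theorem phi_pPoly_of_subtreeAt {v : List ℕ} {S : PTree (Fin m)} {q : MvPolynomial (Fin m) ℝ}
    (hS : subtreeAt T v = some S) (hq : pathProd X T v = some q) :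
    phi T (pPoly T v) = Ideal.Quotient.mk (stoIdeal T) q := by
  change Ideal.Quotient.mk _ (phiToric T (pPoly T v)) = _
  rw [phiToric_pPoly_of_subtreeAt hS hq, map_mul, mk_tPoly_of_subtreeAt hS, mul_one]

theorem phi_pPoly_append_singleton {v : List ℕ} {cs : List (Fin m × PTree (Fin m))} {i : ℕ}
    {q : MvPolynomial (Fin m) ℝ} (hv : subtreeAt T v = some (node cs))
    (hq : pathProd X T v = some q) (hi : i < cs.length) :
    phi T (pPoly T (v ++ [i])) = Ideal.Quotient.mk (stoIdeal T) (q * X cs[i].1) :=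
  phi_pPoly_of_subtreeAt (subtreeAt_append_singleton hv hi) (pathProd_append_singleton X hv hq hi)

variable (T)

theorem modelIdeal_le_pathsIdeal : modelIdeal T ≤ pathsIdeal T := by
  rw [modelIdeal, Ideal.span_le]
  rintro _ ⟨v, w, k, hst, i, hi, rfl⟩
  obtain ⟨csv, csw, hv, hw, hlab, rfl⟩ := id hst
  have hlen : csw.length = csv.length := by simpa using congrArg List.length hlab.symm
  rw [SetLike.mem_coe, pPoly_eq_sum_children hv, pPoly_eq_sum_children hw, hlen,
    Finset.mul_sum, Finset.mul_sum, ← Finset.sum_sub_distrib]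
  exact Ideal.sum_mem _ fun j hj =>
    Ideal.subset_span ⟨v, w, _, hst, i, hi, j, Finset.mem_range.1 hj, rfl⟩

theorem pathsIdeal_le_ker : pathsIdeal T ≤ RingHom.ker (phi T :
    MvPolynomial (Fin (nAtoms T)) ℝ →+* MvPolynomial (Fin m) ℝ ⧸ stoIdeal T) := by
  rw [pathsIdeal, Ideal.span_le]
  rintro _ ⟨v, w, k, ⟨csv, csw, hv, hw, hlab, rfl⟩, i, hi, j, hj, rfl⟩
  have hlen : csw.length = csv.length := by simpa using congrArg List.length hlab.symm
  have hlabel (l : ℕ) (hl : l < csv.length) : csv[l].1 = csw[l].1 := by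
    simpa [hl, hlen] using congrArg (·[l]?) hlab
  obtain ⟨qv, hqv, -⟩ :=
    exists_pathProd_filter_leafData (X : Fin m → MvPolynomial (Fin m) ℝ) hv
  obtain ⟨qw, hqw, -⟩ :=
    exists_pathProd_filter_leafData (X : Fin m → MvPolynomial (Fin m) ℝ) hw
  rw [SetLike.mem_coe, RingHom.mem_ker, map_sub, map_mul, map_mul]
  simp only [AlgHom.coe_toRingHom]
  rw [phi_pPoly_append_singleton hv hqv hi, phi_pPoly_append_singleton hw hqw (hlen ▸ hj),
    phi_pPoly_append_singleton hw hqw (hlen ▸ hi), phi_pPoly_append_singleton hv hqv hj,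
    hlabel i hi, hlabel j hj]
  simp only [map_mul]
  ring

end StagedTree

open StagedTree in
/-- `I_T ⊆ I_paths ⊆ ker φ`. -/
theorem modelIdeal_le_pathsIdeal_le_ker {m : ℕ} (T : PTree (Fin m)) :
    modelIdeal T ≤ pathsIdeal T ∧
      pathsIdeal T ≤ RingHom.ker (phi T : MvPolynomial (Fin (nAtoms T)) ℝ →+*
        MvPolynomial (Fin m) ℝ ⧸ stoIdeal T) :=
  ⟨modelIdeal_le_pathsIdeal T, pathsIdeal_le_ker T⟩
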